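/- Deterministic regret bound for AdaGradBNG (pathwise form of Theorem 1, second inequality). Fix any realization of the samples ξ_1,…,ξ_T and run the AdaGrad with Block-Normalized Gradient updates with parameters η > 0, δ > 0. Suppose each function F(·,ξ_t) is convex and differentiable, every block gradient F_i'(x_t,ξ_t) is nonzero with ‖F_i'(x_t,ξ_t)‖₂ ≤ M_i for all t and i, and ‖x_t − x*‖_∞ ≤ D_∞ for all t, for a fixed point x* ∈ R^d. Then (1/T)∑_{t=1}^T [F(x_t,ξ_t) − F(x*,ξ_t)] ≤ ‖x_1 − x*‖²_{H_1}/(2ηT) + D_∞²√(Bd)/(2η√T) + ∑_{i=1}^B η M_i² √(d_i)/√T. -/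

import Mathlib

/-!
Convexity bounds the regret of round `t` by `⟪F'(x_t, ξ_t), x_t − x*⟫`, which splits over
coordinates. In each coordinate the update turns this product into a difference of squared
distances to `x*` weighted by `(δ + s_t)/(2η)`, plus `η F_k'² / (2(δ + s_t))`. Summation by parts
with the increasing weights and `|x_t − x*| ≤ D∞` bounds the first part by the initial term plus
`D∞² s_T / (2η)`; the second part is at most `η M_i² s_T` because
`g_t² / (δ + ‖g_{1:t}‖) ≤ 2 (‖g_{1:t}‖ − ‖g_{1:t-1}‖)`. Block normalization makes every block of
`g_t` a unit vector, so the squares of the row norms `s_T` over a block sum to `T`, and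
Cauchy–Schwarz bounds their sum by `√(d_i T)` per block and by `√(B d T)` overall.
-/

/-- Euclidean norm of the `i`-th block of a vector in `ℝ^d`, where `ℝ^d` is
partitioned into `B` blocks of sizes `dsz 1, …, dsz B` (coordinates are indexed
by pairs `⟨i, j⟩` with `i` the block index). -/
noncomputable def blockNorm {B : ℕ} {dsz : Fin B → ℕ} (i : Fin B)
    (v : EuclideanSpace ℝ ((i : Fin B) × Fin (dsz i))) : ℝ :=
  Real.sqrt (∑ j : Fin (dsz i), v ⟨i, j⟩ ^ 2)

open Finset

lemma ConvexOn.add_fderiv_sub_le {E : Type*} [NormedAddCommGroup E] [NormedSpace ℝ E]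
    {f : E → ℝ} {f' : E →L[ℝ] ℝ} {a : E} (hf : ConvexOn ℝ Set.univ f)
    (hd : HasFDerivAt f f' a) (b : E) : f a + f' (b - a) ≤ f b := by
  have hφ_conv : ConvexOn ℝ Set.univ (f ∘ AffineMap.lineMap (k := ℝ) a b) := by
    simpa using hf.comp_affineMap (AffineMap.lineMap a b)
  have hφ_deriv : HasDerivAt (f ∘ AffineMap.lineMap (k := ℝ) a b) (f' (b - a)) 0 := by
    have hd0 : HasFDerivAt f f' (AffineMap.lineMap a b (0 : ℝ)) := by simpa using hd
    exact hd0.comp_hasDerivAt 0 AffineMap.hasDerivAt_lineMap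
  have h := hφ_conv.le_slope_of_hasDerivAt (Set.mem_univ 0) (Set.mem_univ 1) one_pos hφ_deriv
  simp only [slope, Function.comp_apply, AffineMap.lineMap_apply_zero,
    AffineMap.lineMap_apply_one, sub_zero, inv_one, one_smul, vsub_eq_sub] at h
  linarith

lemma ConvexOn.sub_le_sum_gradient_mul {ι : Type*} [Fintype ι] {f : EuclideanSpace ℝ ι → ℝ}
    {G a : EuclideanSpace ℝ ι} (hf : ConvexOn ℝ Set.univ f) (hd : HasGradientAt f G a)
    (b : EuclideanSpace ℝ ι) : f a - f b ≤ ∑ k, G k * (a k - b k) := by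
  have h := hf.add_fderiv_sub_le (hasGradientAt_iff_hasFDerivAt.mp hd) b
  rw [InnerProductSpace.toDual_apply_apply, ← neg_sub a b, inner_neg_right, PiLp.inner_apply] at h
  simp only [PiLp.sub_apply, RCLike.inner_apply, conj_trivial] at h
  simp only [mul_comm (G _)]
  linarith

lemma sum_le_sqrt_card_mul_sqrt_sum_sq {ι : Type*} (s : Finset ι) (f : ι → ℝ) :
    ∑ i ∈ s, f i ≤ √(#s : ℝ) * √(∑ i ∈ s, f i ^ 2) := by
  rw [← Real.sqrt_mul (Nat.cast_nonneg _)]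
  exact (le_abs_self _).trans (Real.abs_le_sqrt sq_sum_le_card_mul_sum_sq)

lemma sum_range_succ_mul_sub_le (c D : ℕ → ℝ) (C : ℝ) (n : ℕ) (hc : Monotone c)
    (hDC : ∀ t ≤ n, D t ≤ C) :
    ∑ t ∈ range (n + 1), c t * (D t - D (t + 1)) ≤
      c 0 * D 0 + C * (c n - c 0) - c n * D (n + 1) := by
  induction n with
  | zero => simp [mul_sub]
  | succ n ih =>
    have hjump : (c (n + 1) - c n) * D (n + 1) ≤ (c (n + 1) - c n) * C :=
      mul_le_mul_of_nonneg_left (hDC (n + 1) le_rfl) (sub_nonneg.mpr (hc n.le_succ))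
    rw [sum_range_succ]
    linarith [ih fun t ht => hDC t (by omega)]

/-- `prefixNorm g t = ‖(g 0, …, g (t-1))‖₂`; for a coordinate `k` of the normalized gradients,
`prefixNorm (g · k) (t + 1)` is the paper's `(s_t)_k`. -/
noncomputable def prefixNorm (g : ℕ → ℝ) (t : ℕ) : ℝ := √(∑ r ∈ range t, g r ^ 2)

namespace prefixNorm

variable (g : ℕ → ℝ)

lemma nonneg (t : ℕ) : 0 ≤ prefixNorm g t := Real.sqrt_nonneg _

@[simp] lemma zero : prefixNorm g 0 = 0 := by simp [prefixNorm]

lemma sq_eq_sum (t : ℕ) : prefixNorm g t ^ 2 = ∑ r ∈ range t, g r ^ 2 :=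
  Real.sq_sqrt (sum_nonneg fun _ _ => sq_nonneg _)

lemma monotone : Monotone (prefixNorm g) := fun _ _ h =>
  Real.sqrt_le_sqrt (sum_le_sum_of_subset_of_nonneg (range_subset_range.mpr h)
    fun _ _ _ => sq_nonneg _)

lemma sq_div_add_le {δ : ℝ} (hδ : 0 ≤ δ) (t : ℕ) :
    g t ^ 2 / (δ + prefixNorm g (t + 1)) ≤ 2 * (prefixNorm g (t + 1) - prefixNorm g t) := by
  have hP := nonneg g t
  have hPS := monotone g t.le_succ
  have hstep : prefixNorm g (t + 1) ^ 2 = prefixNorm g t ^ 2 + g t ^ 2 := by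
    rw [sq_eq_sum, sq_eq_sum, sum_range_succ]
  refine div_le_of_le_mul₀ (by linarith) (by linarith) ?_
  nlinarith

lemma sum_sq_div_add_le {δ : ℝ} (hδ : 0 ≤ δ) (n : ℕ) :
    ∑ t ∈ range n, g t ^ 2 / (δ + prefixNorm g (t + 1)) ≤ 2 * prefixNorm g n := by
  calc ∑ t ∈ range n, g t ^ 2 / (δ + prefixNorm g (t + 1))
      ≤ ∑ t ∈ range n, (2 * prefixNorm g (t + 1) - 2 * prefixNorm g t) :=
        sum_le_sum fun t _ => by linarith [sq_div_add_le g hδ t]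
    _ = 2 * prefixNorm g n := by simp [sum_range_sub (fun t => 2 * prefixNorm g t)]

lemma sum_le_sqrt_card_mul_sqrt {ι : Type*} [Fintype ι] (g : ℕ → ι → ℝ) (n : ℕ)
    (hg : ∀ t < n, ∑ j, g t j ^ 2 = 1) :
    ∑ j, prefixNorm (g · j) n ≤ √(Fintype.card ι : ℝ) * √(n : ℝ) := by
  have hsq : ∑ j, prefixNorm (g · j) n ^ 2 = n := by
    simp_rw [sq_eq_sum, sum_comm (s := univ)]
    rw [sum_congr rfl fun t ht => hg t (mem_range.mp ht)]
    simp
  simpa [hsq] using sum_le_sqrt_card_mul_sqrt_sum_sq univ fun j => prefixNorm (g · j) n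

end prefixNorm

lemma mul_sub_eq_of_step {η b G y y' z : ℝ} (hη : η ≠ 0) (hb : b ≠ 0) (hy' : y' = y - η / b * G) :
    G * (y - z) = b / (2 * η) * ((y - z) ^ 2 - (y' - z) ^ 2) + η * G ^ 2 / (2 * b) := by
  subst hy'
  field_simp
  ring

theorem adagrad_coord_regret_le {η δ M D z : ℝ} {g N y : ℕ → ℝ} (n : ℕ) (hη : 0 < η)
    (hδ : 0 < δ) (hupd : ∀ t ≤ n, y (t + 1) = y t - η * N t / (δ + prefixNorm g (t + 1)) * g t)
    (hN : ∀ t ≤ n, |N t| ≤ M) (hy : ∀ t ≤ n, |y t - z| ≤ D) :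
    ∑ t ∈ range (n + 1), N t * g t * (y t - z) ≤
      (δ + prefixNorm g 1) * (y 0 - z) ^ 2 / (2 * η)
        + (D ^ 2 / (2 * η) + η * M ^ 2) * prefixNorm g (n + 1) := by
  obtain ⟨b, hb_def⟩ : ∃ b : ℕ → ℝ, ∀ t, b t = δ + prefixNorm g (t + 1) := ⟨_, fun _ => rfl⟩
  have hb : ∀ t, 0 < b t := fun t => by rw [hb_def]; positivity [prefixNorm.nonneg g (t + 1)]
  have hsplit : ∀ t ∈ range (n + 1), N t * g t * (y t - z) =
      b t / (2 * η) * ((y t - z) ^ 2 - (y (t + 1) - z) ^ 2) + η * (N t * g t) ^ 2 / (2 * b t) :=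
    fun t ht => mul_sub_eq_of_step hη.ne' (hb t).ne'
      (by rw [hupd t (Nat.lt_succ_iff.mp (mem_range.mp ht)), ← hb_def]; ring)
  have hdist : ∑ t ∈ range (n + 1), b t / (2 * η) * ((y t - z) ^ 2 - (y (t + 1) - z) ^ 2) ≤
      b 0 * (y 0 - z) ^ 2 / (2 * η) + D ^ 2 / (2 * η) * prefixNorm g (n + 1) := by
    have habel := sum_range_succ_mul_sub_le (fun t => b t / (2 * η)) (fun t => (y t - z) ^ 2)
      (D ^ 2) n (fun s t hst => by
        simp only [hb_def]; gcongr; exact prefixNorm.monotone g (by omega))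
      (fun t ht => by simpa [sq_abs] using pow_le_pow_left₀ (abs_nonneg _) (hy t ht) 2)
    have hlast : 0 ≤ b n / (2 * η) * (y (n + 1) - z) ^ 2 := by positivity [hb n]
    have hgrowth : D ^ 2 * (b n / (2 * η) - b 0 / (2 * η)) ≤
        D ^ 2 / (2 * η) * prefixNorm g (n + 1) := by
      have hc : b n / (2 * η) - b 0 / (2 * η) ≤ prefixNorm g (n + 1) / (2 * η) := by
        rw [← sub_div, hb_def, hb_def]
        gcongr
        linarith [prefixNorm.nonneg g (0 + 1)]
      calc D ^ 2 * (b n / (2 * η) - b 0 / (2 * η)) ≤ D ^ 2 * (prefixNorm g (n + 1) / (2 * η)) := by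
            gcongr
        _ = D ^ 2 / (2 * η) * prefixNorm g (n + 1) := by ring
    rw [div_mul_eq_mul_div] at habel
    linarith
  have hgrad : ∑ t ∈ range (n + 1), η * (N t * g t) ^ 2 / (2 * b t) ≤
      η * M ^ 2 * prefixNorm g (n + 1) :=
    calc ∑ t ∈ range (n + 1), η * (N t * g t) ^ 2 / (2 * b t)
        ≤ ∑ t ∈ range (n + 1), η * M ^ 2 / 2 * (g t ^ 2 / b t) := by
          refine sum_le_sum fun t ht => ?_
          have hNM : N t ^ 2 ≤ M ^ 2 := by
            simpa [sq_abs] using pow_le_pow_left₀ (abs_nonneg _)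
              (hN t (Nat.lt_succ_iff.mp (mem_range.mp ht))) 2
          have hgb : 0 ≤ η * g t ^ 2 / (2 * b t) := by positivity [hb t]
          calc η * (N t * g t) ^ 2 / (2 * b t) = η * g t ^ 2 / (2 * b t) * N t ^ 2 := by ring
            _ ≤ η * g t ^ 2 / (2 * b t) * M ^ 2 := by gcongr
            _ = η * M ^ 2 / 2 * (g t ^ 2 / b t) := by ring
      _ ≤ η * M ^ 2 / 2 * (2 * prefixNorm g (n + 1)) := by
          rw [← mul_sum]
          gcongr
          simpa only [hb_def] using prefixNorm.sum_sq_div_add_le g hδ.le (n + 1)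
      _ = η * M ^ 2 * prefixNorm g (n + 1) := by ring
  rw [hb_def, zero_add] at hdist
  rw [sum_congr rfl hsplit, sum_add_distrib]
  linarith

lemma sum_prefixNorm_sigma_le {ι : Type*} {α : ι → Type*} [Fintype ι] [∀ i, Fintype (α i)]
    (g : ℕ → (Σ i, α i) → ℝ) (n : ℕ) (hg : ∀ t < n, ∀ i, ∑ j, g t ⟨i, j⟩ ^ 2 = 1) :
    ∑ k, prefixNorm (g · k) n ≤
      √((Fintype.card ι : ℝ) * ∑ i, (Fintype.card (α i) : ℝ)) * √(n : ℝ) := by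
  have hcard := sum_le_sqrt_card_mul_sqrt_sum_sq univ fun i => √(Fintype.card (α i) : ℝ)
  simp only [Real.sq_sqrt (Nat.cast_nonneg _), card_univ] at hcard
  calc ∑ k, prefixNorm (g · k) n
      = ∑ i, ∑ j, prefixNorm (g · ⟨i, j⟩) n := Fintype.sum_sigma _
    _ ≤ ∑ i, √(Fintype.card (α i) : ℝ) * √(n : ℝ) := sum_le_sum fun i _ =>
        prefixNorm.sum_le_sqrt_card_mul_sqrt (fun t j => g t ⟨i, j⟩) n fun t ht => hg t ht i
    _ ≤ _ := by
        rw [← sum_mul, Real.sqrt_mul (Nat.cast_nonneg _)]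
        gcongr

lemma blockNorm_sq {B : ℕ} {dsz : Fin B → ℕ} (i : Fin B)
    (v : EuclideanSpace ℝ ((i : Fin B) × Fin (dsz i))) :
    blockNorm i v ^ 2 = ∑ j, v ⟨i, j⟩ ^ 2 :=
  Real.sq_sqrt (sum_nonneg fun _ _ => sq_nonneg _)

lemma sum_sq_div_blockNorm {B : ℕ} {dsz : Fin B → ℕ} {i : Fin B}
    {v : EuclideanSpace ℝ ((i : Fin B) × Fin (dsz i))} (hv : blockNorm i v ≠ 0) :
    ∑ j, (v ⟨i, j⟩ / blockNorm i v) ^ 2 = 1 := by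
  simp_rw [div_pow, ← sum_div, ← blockNorm_sq]
  exact div_self (pow_ne_zero 2 hv)

lemma sum_add_mul_prefixNorm_sigma_le {ι : Type*} {α : ι → Type*} [Fintype ι]
    [∀ i, Fintype (α i)] (g : ℕ → (Σ i, α i) → ℝ) (n : ℕ)
    (hg : ∀ t < n, ∀ i, ∑ j, g t ⟨i, j⟩ ^ 2 = 1) (a : (Σ i, α i) → ℝ) {C : ℝ} (hC : 0 ≤ C)
    {c : ι → ℝ} (hc : ∀ i, 0 ≤ c i) :
    ∑ k, (a k + (C + c k.1) * prefixNorm (g · k) n) ≤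
      ∑ k, a k + C * (√((Fintype.card ι : ℝ) * ∑ i, (Fintype.card (α i) : ℝ)) * √(n : ℝ))
        + ∑ i, c i * (√(Fintype.card (α i) : ℝ) * √(n : ℝ)) := by
  simp only [add_mul, sum_add_distrib, ← mul_sum, ← add_assoc]
  rw [Fintype.sum_sigma fun k => c k.1 * prefixNorm (g · k) n]
  simp only [← mul_sum]
  refine add_le_add_three le_rfl (mul_le_mul_of_nonneg_left (sum_prefixNorm_sigma_le g n hg) hC)
    (sum_le_sum fun i _ => mul_le_mul_of_nonneg_left ?_ (hc i))
  exact prefixNorm.sum_le_sqrt_card_mul_sqrt (fun t j => g t ⟨i, j⟩) n fun t ht => hg t ht i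

lemma one_div_mul_le_of_le_sqrt {ι : Type*} [Fintype ι] {T η R A D W : ℝ} {c d : ι → ℝ}
    (hT : 0 < T) (hη : η ≠ 0)
    (h : R ≤ A / (2 * η) + D ^ 2 / (2 * η) * (W * √T) + ∑ i, c i * (d i * √T)) :
    1 / T * R ≤ A / (2 * η * T) + D ^ 2 * W / (2 * η * √T) + ∑ i, c i * d i / √T := by
  have hsqrt : 0 < √T := Real.sqrt_pos.mpr hT
  calc 1 / T * R ≤ 1 / T * (A / (2 * η) + D ^ 2 / (2 * η) * (W * √T) + ∑ i, c i * (d i * √T)) := by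
        gcongr
    _ = _ := by
        simp only [← mul_assoc, ← sum_mul, ← sum_div]
        rw [← Real.mul_self_sqrt hT.le, Real.sqrt_mul_self hsqrt.le]
        field_simp

-- Iterations are indexed from `0`: `x 0` is the paper's `x_1`, and `s t` is the paper's `s_{t+1}`.
theorem adagrad_bng_pathwise_regret_second_general (B : ℕ) (dsz : Fin B → ℕ)
    (𝒳 : Type*) (T : ℕ) (hT : 0 < T) (ξ : ℕ → 𝒳)
    (F : EuclideanSpace ℝ ((i : Fin B) × Fin (dsz i)) → 𝒳 → ℝ)
    (F' : EuclideanSpace ℝ ((i : Fin B) × Fin (dsz i)) → 𝒳 →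
      EuclideanSpace ℝ ((i : Fin B) × Fin (dsz i)))
    (hconv : ∀ t < T, ConvexOn ℝ Set.univ (fun y => F y (ξ t)))
    (hgrad : ∀ t < T, ∀ y, HasGradientAt (fun z => F z (ξ t)) (F' y (ξ t)) y)
    (η δ : ℝ) (hη : 0 < η) (hδ : 0 < δ)
    (x : ℕ → EuclideanSpace ℝ ((i : Fin B) × Fin (dsz i)))
    (g : ℕ → EuclideanSpace ℝ ((i : Fin B) × Fin (dsz i)))
    (s : ℕ → ((i : Fin B) × Fin (dsz i)) → ℝ)
    (hg : ∀ t < T, ∀ k : (i : Fin B) × Fin (dsz i),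
      g t k = F' (x t) (ξ t) k / blockNorm k.1 (F' (x t) (ξ t)))
    (hs : ∀ t < T, ∀ k : (i : Fin B) × Fin (dsz i),
      s t k = Real.sqrt (∑ r ∈ Finset.range (t + 1), g r k ^ 2))
    (hupd : ∀ t < T, ∀ k : (i : Fin B) × Fin (dsz i),
      x (t + 1) k = x t k -
        (η * blockNorm k.1 (F' (x t) (ξ t)) / (δ + s t k)) * g t k)
    (M : Fin B → ℝ) (xstar : EuclideanSpace ℝ ((i : Fin B) × Fin (dsz i)))
    (Dinf : ℝ)
    (hnz : ∀ t < T, ∀ i : Fin B, blockNorm i (F' (x t) (ξ t)) ≠ 0)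
    (hM : ∀ t < T, ∀ i : Fin B, blockNorm i (F' (x t) (ξ t)) ≤ M i)
    (hD : ∀ t ≤ T, ∀ k : (i : Fin B) × Fin (dsz i), |x t k - xstar k| ≤ Dinf) :
    (1 / (T : ℝ)) * ∑ t ∈ Finset.range T, (F (x t) (ξ t) - F xstar (ξ t)) ≤
      (∑ k : (i : Fin B) × Fin (dsz i), (δ + s 0 k) * (x 0 k - xstar k) ^ 2)
        / (2 * η * T)
      + Dinf ^ 2 * Real.sqrt ((B : ℝ) * ∑ i : Fin B, (dsz i : ℝ))
          / (2 * η * Real.sqrt T)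
      + ∑ i : Fin B, η * M i ^ 2 * Real.sqrt (dsz i) / Real.sqrt T := by
  obtain ⟨n, rfl⟩ : ∃ n, T = n + 1 := ⟨T - 1, by omega⟩
  set N : ℕ → Fin B → ℝ := fun t i => blockNorm i (F' (x t) (ξ t))
  have hF' : ∀ t < n + 1, ∀ k, F' (x t) (ξ t) k = N t k.1 * g t k := fun t ht k => by
    rw [hg t ht k, mul_div_cancel₀ _ (hnz t ht k.1)]
  have hnormalized : ∀ t < n + 1, ∀ i, ∑ j, g t ⟨i, j⟩ ^ 2 = 1 := fun t ht i => by
    simp_rw [hg t ht]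
    exact sum_sq_div_blockNorm (hnz t ht i)
  have hcoord : ∀ k : (i : Fin B) × Fin (dsz i),
      ∑ t ∈ range (n + 1), N t k.1 * g t k * (x t k - xstar k) ≤
        (δ + s 0 k) * (x 0 k - xstar k) ^ 2 / (2 * η)
          + (Dinf ^ 2 / (2 * η) + η * M k.1 ^ 2) * prefixNorm (g · k) (n + 1) := fun k => by
    rw [hs 0 n.succ_pos k]
    refine adagrad_coord_regret_le n hη hδ (fun t ht => ?_) (fun t ht => ?_) (fun t ht => ?_)
    · rw [hupd t (by omega) k, hs t (by omega) k]; rfl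
    · exact (abs_of_nonneg (Real.sqrt_nonneg _)).trans_le (hM t (by omega) k.1)
    · exact hD t (by omega) k
  refine one_div_mul_le_of_le_sqrt (by positivity) hη.ne' ?_
  calc ∑ t ∈ range (n + 1), (F (x t) (ξ t) - F xstar (ξ t))
      ≤ ∑ t ∈ range (n + 1), ∑ k, N t k.1 * g t k * (x t k - xstar k) :=
        sum_le_sum fun t ht => by
          have ht' := mem_range.mp ht
          simpa only [hF' t ht'] using
            (hconv t ht').sub_le_sum_gradient_mul (hgrad t ht' (x t)) xstar
    _ = ∑ k, ∑ t ∈ range (n + 1), N t k.1 * g t k * (x t k - xstar k) := sum_comm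
    _ ≤ ∑ k, ((δ + s 0 k) * (x 0 k - xstar k) ^ 2 / (2 * η)
          + (Dinf ^ 2 / (2 * η) + η * M k.1 ^ 2) * prefixNorm (g · k) (n + 1)) :=
        sum_le_sum fun k _ => hcoord k
    _ ≤ _ := by
        simpa [sum_div] using sum_add_mul_prefixNorm_sigma_le (fun t k => g t k) (n + 1)
          hnormalized (fun k => (δ + s 0 k) * (x 0 k - xstar k) ^ 2 / (2 * η))
          (C := Dinf ^ 2 / (2 * η)) (by positivity) (c := fun i => η * M i ^ 2)
          fun i => by positivity

/-- **Deterministic regret bound for AdaGrad with Block-Normalized Gradient**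
(pathwise form of Theorem 1, second inequality).

Iterations are indexed by `t = 0, 1, …, T-1` (corresponding to `t = 1, …, T` in the
paper), so `x 0` is the initial point `x_1`, `ξ t` is the fixed realization of the
`t`-th sample, `F' y a` is the gradient of the convex differentiable function
`F (·) a` at `y`, `g t` is the block-normalized gradient at iteration `t`,
`s t k = ‖g_{1:t,k}‖₂` collects the row norms, `H_t = δ I + diag (s t)`, and the
update is `x (t+1) = x t − τ_t ∘ g t` with
`τ_t ⟨i,j⟩ = η ‖F_i'(x_t,ξ_t)‖₂ / (δ + s_t ⟨i,j⟩)`.  Assuming every block gradient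
along the trajectory is nonzero with `‖F_i'(x_t,ξ_t)‖₂ ≤ M i` and
`‖x_t − x*‖_∞ ≤ D∞`, the average regret is bounded by
`‖x_1 − x*‖²_{H_1}/(2ηT) + D∞²√(Bd)/(2η√T) + ∑_i η M_i² √(d_i)/√T`. -/
theorem adagrad_bng_pathwise_regret_second (B : ℕ) (dsz : Fin B → ℕ)
    (𝒳 : Type*) (T : ℕ) (hT : 0 < T) (ξ : ℕ → 𝒳)
    (F : EuclideanSpace ℝ ((i : Fin B) × Fin (dsz i)) → 𝒳 → ℝ)
    (F' : EuclideanSpace ℝ ((i : Fin B) × Fin (dsz i)) → 𝒳 →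
      EuclideanSpace ℝ ((i : Fin B) × Fin (dsz i)))
    (hconv : ∀ t < T, ConvexOn ℝ Set.univ (fun y => F y (ξ t)))
    (hgrad : ∀ t < T, ∀ y, HasGradientAt (fun z => F z (ξ t)) (F' y (ξ t)) y)
    (η δ : ℝ) (hη : 0 < η) (hδ : 0 < δ)
    (x : ℕ → EuclideanSpace ℝ ((i : Fin B) × Fin (dsz i)))
    (g : ℕ → EuclideanSpace ℝ ((i : Fin B) × Fin (dsz i)))
    (s : ℕ → ((i : Fin B) × Fin (dsz i)) → ℝ)
    (hg : ∀ t < T, ∀ k : (i : Fin B) × Fin (dsz i),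
      g t k = F' (x t) (ξ t) k / blockNorm k.1 (F' (x t) (ξ t)))
    (hs : ∀ t < T, ∀ k : (i : Fin B) × Fin (dsz i),
      s t k = Real.sqrt (∑ r ∈ Finset.range (t + 1), g r k ^ 2))
    (hupd : ∀ t < T, ∀ k : (i : Fin B) × Fin (dsz i),
      x (t + 1) k = x t k -
        (η * blockNorm k.1 (F' (x t) (ξ t)) / (δ + s t k)) * g t k)
    (M : Fin B → ℝ) (xstar : EuclideanSpace ℝ ((i : Fin B) × Fin (dsz i)))
    (Dinf : ℝ) (hDinf : 0 < Dinf)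
    (hnz : ∀ t < T, ∀ i : Fin B, blockNorm i (F' (x t) (ξ t)) ≠ 0)
    (hM : ∀ t < T, ∀ i : Fin B, blockNorm i (F' (x t) (ξ t)) ≤ M i)
    (hD : ∀ t ≤ T, ∀ k : (i : Fin B) × Fin (dsz i), |x t k - xstar k| ≤ Dinf) :
    (1 / (T : ℝ)) * ∑ t ∈ Finset.range T, (F (x t) (ξ t) - F xstar (ξ t)) ≤
      (∑ k : (i : Fin B) × Fin (dsz i), (δ + s 0 k) * (x 0 k - xstar k) ^ 2)
        / (2 * η * T)
      + Dinf ^ 2 * Real.sqrt ((B : ℝ) * ∑ i : Fin B, (dsz i : ℝ))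
          / (2 * η * Real.sqrt T)
      + ∑ i : Fin B, η * M i ^ 2 * Real.sqrt (dsz i) / Real.sqrt T :=
  adagrad_bng_pathwise_regret_second_general B dsz 𝒳 T hT ξ F F' hconv hgrad η δ hη hδ x g s hg hs
    hupd M xstar Dinf hnz hM hD
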